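/- For all z, w in the open unit ball 𝔹_n of ℂ^n, the Bergman distance satisfies β(z,w) ≥ (1/2)|z − w|, where |·| is the Euclidean norm. -/

import Mathlib

/-!
Write `A = ‖z‖²`, `Z = ‖w‖²`, `α = ⟪z, w⟫` and `D = |1 - α|²`. The classical identity
`(1 - |φ_z(w)|²) D = (1 - A)(1 - Z)` gives `|φ_z(w)| < 1` and `|φ_z(w)|² D = ‖z - w‖² + |α|² - AZ`.
The Gram determinant `AZ - |α|²` of `z, w` is a quarter of that of `z - w, z + w`, so
`4 (AZ - |α|²) ≤ ‖z - w‖² ‖z + w‖² ≤ ‖z - w‖² (4 - D)`, which is `‖z - w‖ ≤ 2 |φ_z(w)|`.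
Finally `t ≤ artanh t = (1/2) log ((1 + t)/(1 - t))` for `0 ≤ t < 1`.
-/

open Metric Filter

open Classical in
/-- The Möbius involution `φ_a` of the unit ball `𝔹_n`:
`φ_a(z) = (a − P_a(z) − s_a Q_a(z)) / (1 − ⟨z,a⟩)` for `a ≠ 0`, and `φ_0 = −id`. -/
noncomputable def mobius {n : ℕ} (a z : EuclideanSpace ℂ (Fin n)) :
    EuclideanSpace ℂ (Fin n) :=
  if a = 0 then -z
  else
    ((1 - (inner ℂ a z : ℂ))⁻¹) •
      (a - ((inner ℂ a z : ℂ) / (inner ℂ a a : ℂ)) • a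
         - (Real.sqrt (1 - ‖a‖ ^ 2) : ℂ) • (z - ((inner ℂ a z : ℂ) / (inner ℂ a a : ℂ)) • a))

/-- The Bergman distance on the unit ball:
`β(z,w) = (1/2) log((1 + |φ_z(w)|)/(1 − |φ_z(w)|))`. -/
noncomputable def bergman {n : ℕ} (z w : EuclideanSpace ℂ (Fin n)) : ℝ :=
  Real.log ((1 + ‖mobius z w‖) / (1 - ‖mobius z w‖)) / 2

section InnerProduct

variable {𝕜 E : Type*} [RCLike 𝕜] [NormedAddCommGroup E] [InnerProductSpace 𝕜 E]
open RCLike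

theorem inner_ne_one_of_norm_lt_one {z w : E} (hz : ‖z‖ < 1) (hw : ‖w‖ ≤ 1) :
    inner 𝕜 z w ≠ 1 := by
  intro h
  have := norm_inner_le_norm (𝕜 := 𝕜) z w
  rw [h, norm_one] at this
  nlinarith [norm_nonneg z]

theorem norm_one_sub_inner_pos {z w : E} (hz : ‖z‖ < 1) (hw : ‖w‖ ≤ 1) :
    0 < ‖1 - inner 𝕜 z w‖ :=
  norm_pos_iff.2 (sub_ne_zero.2 (inner_ne_one_of_norm_lt_one hz hw).symm)

theorem norm_sub_sq_mul_norm_one_sub_inner_sq_le {z w : E} (hz : ‖z‖ ≤ 1) (hw : ‖w‖ ≤ 1) :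
    ‖z - w‖ ^ 2 * ‖1 - inner 𝕜 z w‖ ^ 2 ≤
      4 * (‖1 - inner 𝕜 z w‖ ^ 2 - (1 - ‖z‖ ^ 2) * (1 - ‖w‖ ^ 2)) := by
  set α := inner 𝕜 z w
  have hd : ‖z - w‖ ^ 2 = ‖z‖ ^ 2 - 2 * re α + ‖w‖ ^ 2 := norm_sub_sq z w
  have hD : ‖1 - α‖ ^ 2 = (1 - re α) ^ 2 + im α ^ 2 := by
    rw [norm_sq_eq_def]
    simp only [map_sub, one_re, one_im, zero_sub, mul_neg, neg_mul, neg_neg]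
    ring
  have hcs : re α ^ 2 + im α ^ 2 ≤ ‖z‖ ^ 2 * ‖w‖ ^ 2 := by
    rw [← mul_pow, sq (re α), sq (im α), ← norm_sq_eq_def]
    exact pow_le_pow_left₀ (norm_nonneg _) (norm_inner_le_norm z w) 2
  have hAZ : ‖z‖ ^ 2 + ‖w‖ ^ 2 + (re α ^ 2 + im α ^ 2) ≤ 3 := by
    have hz2 : ‖z‖ ^ 2 ≤ 1 := pow_le_one₀ (norm_nonneg z) hz
    have hw2 : ‖w‖ ^ 2 ≤ 1 := pow_le_one₀ (norm_nonneg w) hw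
    nlinarith [mul_le_one₀ hz2 (sq_nonneg _) hw2]
  -- Gram determinants: `4 (‖z‖²‖w‖² - |⟪z,w⟫|²) ≤ ‖z - w‖² ‖z + w‖²`; and `‖z + w‖² ≤ 4 - ‖1 - ⟪z,w⟫‖²`
  rw [hd, hD]
  nlinarith [mul_nonneg (hd ▸ sq_nonneg ‖z - w‖) (sub_nonneg.2 hAZ),
    sq_nonneg (‖z‖ ^ 2 - ‖w‖ ^ 2), sq_nonneg (im α)]

end InnerProduct

section ComplexInnerProduct

open ComplexConjugate

variable {E : Type*} [NormedAddCommGroup E] [InnerProductSpace ℂ E]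

theorem norm_sq_sub_smul_sub_proj {a : E} (ha : a ≠ 0) (z : E) (s : ℝ) :
    ‖a - (inner ℂ a z / inner ℂ a a) • a - (s : ℂ) • (z - (inner ℂ a z / inner ℂ a a) • a)‖ ^ 2
      = ‖a‖ ^ 2 - 2 * (inner ℂ a z).re + (1 - s ^ 2) * ‖inner ℂ a z‖ ^ 2 / ‖a‖ ^ 2
        + s ^ 2 * ‖z‖ ^ 2 := by
  have hself : ∀ x : E, inner ℂ x x = (‖x‖ : ℂ) ^ 2 := inner_self_eq_norm_sq_to_K
  have hza : inner ℂ z a = conj (inner ℂ a z) := (inner_conj_symm z a).symm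
  have ha' : (‖a‖ : ℂ) ≠ 0 := by simpa using ha
  apply Complex.ofReal_injective
  push_cast
  rw [← hself, Complex.re_eq_add_conj, ← Complex.conj_mul']
  simp only [inner_sub_left, inner_sub_right, inner_smul_left, inner_smul_right, hself a, hself z,
    hza, map_div₀, map_pow, Complex.conj_ofReal]
  field_simp
  ring

end ComplexInnerProduct

section Mobius

variable {n : ℕ}

theorem norm_mobius_sq_mul {a z : EuclideanSpace ℂ (Fin n)} (ha : ‖a‖ ≤ 1)
    (haz : inner ℂ a z ≠ 1) :
    ‖mobius a z‖ ^ 2 * ‖1 - inner ℂ a z‖ ^ 2 =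
      ‖1 - inner ℂ a z‖ ^ 2 - (1 - ‖a‖ ^ 2) * (1 - ‖z‖ ^ 2) := by
  unfold mobius
  split_ifs with ha0
  · subst ha0; simp
  have hD : ‖1 - inner ℂ a z‖ ^ 2 = 1 - 2 * (inner ℂ a z).re + ‖inner ℂ a z‖ ^ 2 := by
    simpa using norm_sub_sq (𝕜 := ℂ) (1 : ℂ) (inner ℂ a z)
  have hD0 : ‖1 - inner ℂ a z‖ ≠ 0 := norm_ne_zero_iff.2 (sub_ne_zero.2 haz.symm)
  have ha0' : ‖a‖ ≠ 0 := norm_ne_zero_iff.2 ha0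
  rw [norm_smul, mul_pow, norm_sq_sub_smul_sub_proj ha0,
    Real.sq_sqrt (by nlinarith [norm_nonneg a]), norm_inv]
  field_simp
  rw [hD]
  ring

theorem norm_mobius_lt_one {z w : EuclideanSpace ℂ (Fin n)} (hz : ‖z‖ < 1) (hw : ‖w‖ < 1) :
    ‖mobius z w‖ < 1 := by
  have hzw := inner_ne_one_of_norm_lt_one (𝕜 := ℂ) hz hw.le
  have hD := pow_pos (norm_one_sub_inner_pos (𝕜 := ℂ) hz hw.le) 2
  have hgap : 0 < (1 - ‖z‖ ^ 2) * (1 - ‖w‖ ^ 2) := by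
    have := norm_nonneg z
    have := norm_nonneg w
    apply mul_pos <;> nlinarith
  have h := norm_mobius_sq_mul hz.le hzw
  have : ‖mobius z w‖ ^ 2 < 1 := by nlinarith
  exact (sq_lt_one_iff₀ (norm_nonneg _)).1 this

theorem norm_sub_le_two_mul_norm_mobius {z w : EuclideanSpace ℂ (Fin n)} (hz : ‖z‖ < 1)
    (hw : ‖w‖ ≤ 1) : ‖z - w‖ ≤ 2 * ‖mobius z w‖ := by
  have hzw := inner_ne_one_of_norm_lt_one (𝕜 := ℂ) hz hw
  have hD := pow_pos (norm_one_sub_inner_pos (𝕜 := ℂ) hz hw) 2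
  have h : ‖z - w‖ ^ 2 * ‖1 - inner ℂ z w‖ ^ 2 ≤
      (2 * ‖mobius z w‖) ^ 2 * ‖1 - inner ℂ z w‖ ^ 2 := by
    rw [mul_pow, mul_assoc, norm_mobius_sq_mul hz.le hzw]
    linarith [norm_sub_sq_mul_norm_one_sub_inner_sq_le (𝕜 := ℂ) hz.le hw]
  exact (pow_le_pow_iff_left₀ (norm_nonneg _) (by positivity) two_ne_zero).1
    (le_of_mul_le_mul_right h hD)

theorem norm_mobius_le_bergman {z w : EuclideanSpace ℂ (Fin n)} (h : ‖mobius z w‖ < 1) :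
    ‖mobius z w‖ ≤ bergman z w :=
  calc ‖mobius z w‖
      = ∑ i ∈ Finset.range 1, ‖mobius z w‖ ^ (2 * i + 1) / (2 * i + 1) := by simp
    _ ≤ 1 / 2 * Real.log ((1 + ‖mobius z w‖) / (1 - ‖mobius z w‖)) :=
        Real.sum_range_le_log_div (norm_nonneg _) h 1
    _ = bergman z w := by rw [bergman]; ring

end Mobius

theorem bergman_ge_half_dist {n : ℕ} (z w : EuclideanSpace ℂ (Fin n))
    (hz : z ∈ ball (0 : EuclideanSpace ℂ (Fin n)) 1)
    (hw : w ∈ ball (0 : EuclideanSpace ℂ (Fin n)) 1) :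
    (1 / 2 : ℝ) * ‖z - w‖ ≤ bergman z w := by
  rw [mem_ball_zero_iff] at hz hw
  calc (1 / 2 : ℝ) * ‖z - w‖ ≤ ‖mobius z w‖ := by
        linarith [norm_sub_le_two_mul_norm_mobius hz hw.le]
    _ ≤ bergman z w := norm_mobius_le_bergman (norm_mobius_lt_one hz hw)
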